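/- Let X = (ω+1) × ω₁ with the product of order topologies. Then X is a locally compact, non-compact, first-countable Hausdorff space, and its one-point compactification αX is radial at the point at infinity ⋆: every subset of X whose closure in αX contains ⋆ contains the range of a transfinite sequence converging to ⋆. -/

import Mathlib

/-!
Since `ω+1` is compact, every initial segment `[0, β]` of `ω₁` is compact and `ω₁` has no largest
element, the (closed-)cocompact filter of `(ω+1) × ω₁` is the pullback of `atTop` on `ω₁` along the
second projection. Hence `⋆` lies in the closure of `A` exactly when the second coordinates of
points of `A` are cofinal in `ω₁`, and choosing for each `β < ω₁` a point of `A` with second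
coordinate at least `β` gives an `ω₁`-indexed net in `A` converging to `⋆`. First countability
holds because every ordinal below `ω₁` has only countably many predecessors.
-/

open Filter Topology Set

universe u v

/-- `x` has a neighbourhood base in the subspace `S` well-ordered by reverse inclusion. -/
def HasWONhdsBase {X : Type u} [TopologicalSpace X] (x : X) (S : Set X) : Prop :=
  ∃ (o : Ordinal.{u}) (B : ↥(Set.Iio o) → Set X),
    (∀ i, B i ⊆ S) ∧ (∀ i j, i ≤ j → B j ⊆ B i) ∧
    (𝓝[S] x).HasBasis (fun _ => True) B

/-- `X` is radial at `x`. -/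
def RadialAt (X : Type u) [TopologicalSpace X] (x : X) : Prop :=
  ∀ A : Set X, x ∈ closure A →
    ∃ (o : Ordinal.{u}) (f : ↥(Set.Iio o) → X), o ≠ 0 ∧
      (∀ i, f i ∈ A) ∧ Filter.Tendsto f Filter.atTop (𝓝 x)
noncomputable def om1 : Ordinal.{0} := (Cardinal.aleph 1).ord

/-- The space `(ω+1) × ω₁`. -/
abbrev X14 : Type 1 := ↥(Set.Iic Ordinal.omega0.{0}) × ↥(Set.Iio om1)

open scoped Ordinal
open OnePoint

instance Set.OrdConnected.compactIccSpace {α : Type*} [Preorder α] [TopologicalSpace α]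
    [CompactIccSpace α] {s : Set α} [s.OrdConnected] : CompactIccSpace s :=
  ⟨fun {a b} => by
    rw [Topology.IsEmbedding.subtypeVal.isCompact_iff, image_subtype_val_Icc]
    exact isCompact_Icc⟩

theorem weaklyLocallyCompactSpace_of_compactIccSpace {α : Type*} [LinearOrder α]
    [TopologicalSpace α] [OrderTopology α] [CompactIccSpace α] [OrderBot α] [NoMaxOrder α] :
    WeaklyLocallyCompactSpace α :=
  ⟨fun x =>
    let ⟨y, hy⟩ := exists_gt x
    ⟨Iic y, by rw [← Icc_bot]; exact isCompact_Icc, Iic_mem_nhds hy⟩⟩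

theorem isCountablyGenerated_nhds_of_countable_Iio {α : Type*} [LinearOrder α]
    [TopologicalSpace α] [OrderTopology α] [SuccOrder α] {a : α} (ha : (Iio a).Countable) :
    (𝓝 a).IsCountablyGenerated := by
  by_cases hmin : IsMin a
  · rw [← SuccOrder.nhdsLE_eq_nhds, hmin.Iic_eq, nhdsWithin_singleton, ← principal_singleton]
    infer_instance
  · exact HasCountableBasis.isCountablyGenerated
      ⟨SuccOrder.hasBasis_nhds_Ioc_of_exists_lt (not_isMin_iff.1 hmin), ha⟩

theorem firstCountableTopology_of_countable_Iio {α : Type*} [LinearOrder α]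
    [TopologicalSpace α] [OrderTopology α] [SuccOrder α] {s : Set α}
    (hs : ∀ a ∈ s, (Iio a).Countable) : FirstCountableTopology s :=
  ⟨fun a => by
    rw [nhds_subtype]
    have := isCountablyGenerated_nhds_of_countable_Iio (hs a a.2)
    infer_instance⟩

theorem Filter.cocompact_prod_eq_comap_snd {X Y : Type*} [TopologicalSpace X] [TopologicalSpace Y]
    [CompactSpace X] : cocompact (X × Y) = comap Prod.snd (cocompact Y) := by
  rw [← coprod_cocompact, cocompact_eq_bot, Filter.coprod, comap_bot, bot_sup_eq]

theorem OnePoint.frequently_coclosedCompact_of_infty_mem_closure {X : Type*} [TopologicalSpace X]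
    {A : Set (OnePoint X)} (hA : ∞ ∈ closure A) (hinf : ∞ ∉ A) :
    ∃ᶠ x : X in coclosedCompact X, (x : OnePoint X) ∈ A := by
  rw [← comap_coe_nhds_infty, frequently_comap]
  refine (mem_closure_iff_frequently.1 hA).mono fun y hy => ?_
  induction y using OnePoint.rec with
  | infty => exact absurd hy hinf
  | coe x => exact ⟨x, rfl, hy⟩

theorem Ordinal.nonempty_Iio_typeLT_orderIso (ι : Type u) [LinearOrder ι] [WellFoundedLT ι] :
    Nonempty (Iio (typeLT ι) ≃o ι) :=
  let ⟨e⟩ := type_eq.1 (type_toType (typeLT ι))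
  ⟨ToType.mk.trans (OrderIso.ofRelIsoLT e)⟩

theorem exists_forall_mem_tendsto_comap_atTop {X ι : Type*} [LinearOrder ι] [Nonempty ι]
    {φ : X → ι} {A : Set X} (hA : ∃ᶠ x in comap φ atTop, x ∈ A) :
    ∃ g : ι → X, (∀ i, g i ∈ A) ∧ Tendsto g atTop (comap φ atTop) := by
  rw [frequently_comap, frequently_atTop] at hA
  choose j hij x hxj hxA using hA
  refine ⟨x, hxA, tendsto_comap_iff.2 (tendsto_atTop_mono (fun i => ?_) tendsto_id)⟩
  rw [Function.comp_apply, hxj]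
  exact hij i

theorem OnePoint.radialAt_infty {X ι : Type u} [TopologicalSpace X] [LinearOrder ι]
    [WellFoundedLT ι] [Nonempty ι] (φ : X → ι) (hφ : coclosedCompact X = comap φ atTop) :
    RadialAt (OnePoint X) ∞ := by
  intro A hA
  obtain ⟨e⟩ := Ordinal.nonempty_Iio_typeLT_orderIso ι
  have ho : typeLT ι ≠ 0 := Ordinal.type_ne_zero_of_nonempty _
  by_cases hinf : ∞ ∈ A
  · exact ⟨typeLT ι, fun _ => ∞, ho, fun _ => hinf, tendsto_const_nhds⟩
  have hfreq := frequently_coclosedCompact_of_infty_mem_closure hA hinf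
  rw [hφ] at hfreq
  obtain ⟨g, hgA, hg⟩ := exists_forall_mem_tendsto_comap_atTop hfreq
  refine ⟨typeLT ι, fun i => g (e i), ho, fun i => hgA _, ?_⟩
  exact tendsto_coe_infty.comp (hφ ▸ hg.comp e.tendsto_atTop)

theorem om1_isSuccLimit : Order.IsSuccLimit om1 :=
  Cardinal.isSuccLimit_ord (Cardinal.aleph0_le_aleph 1)

instance : NoMaxOrder (Iio om1) := om1_isSuccLimit.isSuccPrelimit.noMaxOrder_Iio

instance : OrderBot (Iio om1) where
  bot := ⟨⊥, om1_isSuccLimit.bot_lt⟩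
  bot_le x := show (⊥ : Ordinal) ≤ x.1 from bot_le

theorem countable_Iio_of_lt_om1 {a : Ordinal.{0}} (ha : a < om1) : (Iio a).Countable := by
  rw [← Cardinal.le_aleph0_iff_set_countable, Cardinal.mk_Iio_ordinal,
    Cardinal.lift_le_aleph0]
  simpa using Cardinal.lt_ord.1 ha

theorem omega0_lt_om1 : Ordinal.omega0.{0} < om1 :=
  Cardinal.lt_ord.2 (by simp)

instance : FirstCountableTopology (Iio om1) :=
  firstCountableTopology_of_countable_Iio fun _ ha => countable_Iio_of_lt_om1 ha

instance : FirstCountableTopology (Iic Ordinal.omega0.{0}) :=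
  firstCountableTopology_of_countable_Iio fun _ ha =>
    countable_Iio_of_lt_om1 (lt_of_le_of_lt ha omega0_lt_om1)

instance : CompactSpace (Iic Ordinal.omega0.{0}) :=
  isCompact_iff_compactSpace.1 (by rw [← Icc_bot]; exact isCompact_Icc)

instance : LocallyCompactSpace (Iio om1) :=
  have := weaklyLocallyCompactSpace_of_compactIccSpace (α := Iio om1)
  inferInstance

theorem coclosedCompact_X14 :
    coclosedCompact X14 = comap (Prod.snd : X14 → Iio om1) atTop := by
  rw [coclosedCompact_eq_cocompact, cocompact_prod_eq_comap_snd, cocompact_eq_atTop]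

theorem stmt14 :
    LocallyCompactSpace X14 ∧ ¬ CompactSpace X14 ∧
    FirstCountableTopology X14 ∧ T2Space X14 ∧
    ∀ A : Set X14, (OnePoint.infty : OnePoint X14) ∈ closure (OnePoint.some '' A) →
      ∃ (o : Ordinal.{1}) (f : ↥(Set.Iio o) → OnePoint X14), o ≠ 0 ∧
        (∀ i, f i ∈ OnePoint.some '' A) ∧
        Filter.Tendsto f Filter.atTop (𝓝 (OnePoint.infty : OnePoint X14)) := by
  refine ⟨inferInstance, ?_, inferInstance, inferInstance,
    fun A => OnePoint.radialAt_infty _ coclosedCompact_X14 _⟩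
  rw [not_compactSpace_iff, ← cocompact_neBot_iff, ← coclosedCompact_eq_cocompact,
    coclosedCompact_X14]
  exact atTop_neBot.comap_of_surj Prod.snd_surjective
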